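/- Convergence criterion for the flavour expansion of one-loop integrals. Let ι be a finite type, let D : ι → ℝ take positive values, let Â be an ι×ι complex Hermitian matrix with zero diagonal, let p ≥ 2 and b₁,…,b_p be positive reals, and define the real symmetric mass-insertion matrix Q by Q_{IJ} = |Â_{IJ}| / √(D_I · D_J). If every eigenvalue λ of Q satisfies |λ| < 1, then for all indices I, J the flavour expansion series is absolutely convergent: the sequence M ↦ ∑_{K₁,…,K_{M−1} ∈ ι} J_{M+1+p}(D_I, D_J, D_{K₁},…,D_{K_{M−1}}, b₁,…,b_p) · |Â_{IK₁}| ⋯ |Â_{K_{M−1}J}| (indexed by M ≥ 1) is summable. -/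

import Mathlib

/-!
Each internal propagator obeys `1/(u + D_K) ≤ 1/D_K`, so the `M`-th one-loop integral is at most
`J_{2+p}(D_I, D_J, b) · ∏ 1/D_{K_i}`. Along a path these weights combine with the entries `|Â|`
into `√(D_I D_J) · Q_{I K₁} ⋯ Q_{K_{M-1} J}`, and summing over the internal indices gives
`√(D_I D_J) (Q^M)_{IJ}`. By the spectral theorem `(Q^M)_{IJ}` is a finite combination of the
geometric sequences `λ^M`, `λ` an eigenvalue of `Q`, which are summable since `|λ| < 1`.
-/

open Matrix

/-- The zero-momentum master one-loop integral
`Jₙ(a₁,…,a_n) = ∫₀^∞ u / ∏_{j=1}^n (u + a_j) du`. -/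
noncomputable def Jint {n : ℕ} (a : Fin n → ℝ) : ℝ :=
  ∫ u in Set.Ioi (0 : ℝ), u / ∏ j, (u + a j)

/-- The product of matrix entries of `B` along the chain
`I → K 0 → K 1 → ⋯ → K (m-1) → J` (for `m = 0` it is just `B I J`). -/
def pathProd {R : Type*} [CommMonoid R] {ι : Type*} (B : Matrix ι ι R) (I J : ι)
    {m : ℕ} (K : Fin m → ι) : R :=
  let nodes : Fin (m + 2) → ι := Fin.cons I (Fin.snoc K J)
  ∏ i : Fin (m + 1), B (nodes i.castSucc) (nodes i.succ)

section PathProd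

variable {R ι : Type*} [CommMonoid R] (B : Matrix ι ι R) (I J : ι) {m : ℕ}

theorem pathProd_eq_prod (K : Fin m → ι) :
    pathProd B I J K = ∏ i : Fin (m + 1),
      B ((Fin.cons I K : Fin (m + 1) → ι) i) ((Fin.snoc K J : Fin (m + 1) → ι) i) := by
  refine Finset.prod_congr rfl fun i _ => ?_
  rw [Fin.cons_succ, Fin.cons_snoc_eq_snoc_cons, Fin.snoc_castSucc]

theorem pathProd_cons (k : ι) (K : Fin m → ι) :
    pathProd B I J (Fin.cons k K) = B I k * pathProd B k J K := by
  rw [pathProd_eq_prod, pathProd_eq_prod, Fin.prod_univ_succ, ← Fin.cons_snoc_eq_snoc_cons]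
  simp

theorem pathProd_of_mul_mul (g : ι → R) (K : Fin m → ι) :
    pathProd (of fun i j => g i * B i j * g j) I J K
      = g I * g J * (∏ i, g (K i) ^ 2) * pathProd B I J K := by
  simp only [pathProd_eq_prod, of_apply, Finset.prod_mul_distrib]
  rw [Fin.prod_univ_succ (fun i => g ((Fin.cons I K : Fin (m + 1) → ι) i)),
    Fin.prod_univ_castSucc (fun i => g ((Fin.snoc K J : Fin (m + 1) → ι) i))]
  simp only [Fin.cons_zero, Fin.cons_succ, Fin.snoc_castSucc, Fin.snoc_last, pow_two,
    Finset.prod_mul_distrib]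
  ac_rfl

theorem sum_pathProd {R : Type*} [CommSemiring R] [Fintype ι] [DecidableEq ι]
    (B : Matrix ι ι R) (m : ℕ) (I J : ι) :
    ∑ K : Fin m → ι, pathProd B I J K = (B ^ (m + 1)) I J := by
  induction m generalizing I with
  | zero => simp [pathProd_eq_prod, Fin.snoc_zero]
  | succ m ih =>
    rw [← (Fin.consEquiv fun _ => ι).sum_comp, Fintype.sum_prod_type, pow_succ', mul_apply]
    refine Finset.sum_congr rfl fun k _ => ?_
    change ∑ K, pathProd B I J (Fin.cons k K) = _
    simp only [pathProd_cons, ← Finset.mul_sum, ih]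

theorem pathProd_nonneg {B : Matrix ι ι ℝ} (hB : ∀ i j, 0 ≤ B i j) (K : Fin m → ι) :
    0 ≤ pathProd B I J K :=
  Finset.prod_nonneg fun _ _ => hB _ _

end PathProd

section Spectral

variable {𝕜 ι : Type*} [RCLike 𝕜] [Fintype ι] [DecidableEq ι] {Q : Matrix ι ι 𝕜}

theorem Matrix.IsHermitian.hasEigenvalue_eigenvalues (hQ : Q.IsHermitian) (k : ι) :
    Module.End.HasEigenvalue (toLin' Q) (hQ.eigenvalues k : 𝕜) := by
  refine Module.End.hasEigenvalue_iff_mem_spectrum.mpr ?_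
  rw [spectrum_toLin']
  exact spectrum.of_algebraMap_mem 𝕜 (hQ.eigenvalues_mem_spectrum_real k)

theorem Matrix.IsHermitian.pow_apply (hQ : Q.IsHermitian) (n : ℕ) (I J : ι) :
    (Q ^ n) I J = ∑ k, hQ.eigenvectorUnitary I k * (hQ.eigenvalues k : 𝕜) ^ n *
      star (hQ.eigenvectorUnitary J k) := by
  conv_lhs => rw [hQ.spectral_theorem, ← map_pow, diagonal_pow, Unitary.conjStarAlgAut_apply,
    mul_apply]
  simp [mul_diagonal]

theorem Matrix.IsHermitian.summable_pow_apply (hQ : Q.IsHermitian)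
    (h : ∀ k, |hQ.eigenvalues k| < 1) (I J : ι) : Summable fun n => (Q ^ n) I J := by
  simp_rw [hQ.pow_apply]
  refine summable_sum fun k _ => ?_
  have hk : ‖(hQ.eigenvalues k : 𝕜)‖ < 1 := by rw [RCLike.norm_ofReal]; exact h k
  exact ((summable_geometric_of_norm_lt_one hk).mul_left _).mul_right _

end Spectral

section OneLoop

open MeasureTheory Set

theorem integrableOn_div_prod_add {n : ℕ} (hn : 3 ≤ n) {a : Fin n → ℝ} (ha : ∀ j, 0 < a j) :
    IntegrableOn (fun u => u / ∏ j, (u + a j)) (Ioi 0) := by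
  have : Nonempty (Fin n) := ⟨⟨0, by omega⟩⟩
  obtain ⟨j₀, hj₀⟩ := Finite.exists_min a
  set c := a j₀
  -- the integrand is at most `(u + c) / (u + c) ^ n = (u + c) ^ (1 - n)`
  have hexp : (1 - n : ℝ) < -1 := by
    have : (3 : ℝ) ≤ n := by exact_mod_cast hn
    linarith
  refine (integrableOn_add_rpow_Ioi_of_lt hexp (by simpa using ha j₀ : -c < 0)).mono'
    (Measurable.aestronglyMeasurable (by fun_prop)) ?_
  filter_upwards [ae_restrict_mem measurableSet_Ioi] with u (hu : 0 < u)
  have hc : 0 < u + c := by linarith [ha j₀]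
  have hprod : (u + c) ^ n ≤ ∏ j, (u + a j) := by
    simpa using Finset.prod_le_prod (s := Finset.univ) (fun _ _ => hc.le)
      (fun j _ => add_le_add_right (hj₀ j) u)
  rw [Real.norm_of_nonneg (div_nonneg hu.le ((pow_pos hc n).le.trans hprod)),
    Real.rpow_sub hc, Real.rpow_one, Real.rpow_natCast]
  exact div_le_div₀ hc.le (by linarith [ha j₀]) (by positivity) hprod

theorem Jint_nonneg {n : ℕ} {a : Fin n → ℝ} (ha : ∀ j, 0 ≤ a j) : 0 ≤ Jint a :=
  setIntegral_nonneg measurableSet_Ioi fun u (hu : 0 < u) =>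
    div_nonneg hu.le (Finset.prod_nonneg fun j _ => by linarith [ha j])

theorem Jint_le_inv_mul_Jint {n n' : ℕ} (hn' : 3 ≤ n') {a : Fin n → ℝ} {a' : Fin n' → ℝ}
    (ha' : ∀ j, 0 < a' j) {c : ℝ} (hc : 0 < c)
    (h : ∀ u, 0 < u → c * ∏ j, (u + a' j) ≤ ∏ j, (u + a j)) :
    Jint a ≤ c⁻¹ * Jint a' := by
  have hpos : ∀ u, 0 < u → 0 < c * ∏ j, (u + a' j) := fun u hu =>
    mul_pos hc (Finset.prod_pos fun j _ => by linarith [ha' j])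
  rw [Jint, Jint, ← integral_const_mul]
  refine integral_mono_of_nonneg ?_ ((integrableOn_div_prod_add hn' ha').const_mul _) ?_ <;>
    filter_upwards [ae_restrict_mem measurableSet_Ioi] with u (hu : 0 < u)
  · exact div_nonneg hu.le ((hpos u hu).trans_le (h u hu)).le
  · calc u / ∏ j, (u + a j) ≤ u / (c * ∏ j, (u + a' j)) :=
          div_le_div_of_nonneg_left hu.le (hpos u hu) (h u hu)
      _ = c⁻¹ * (u / ∏ j, (u + a' j)) := by field_simp

theorem append_cons_cons_pos {p m : ℕ} {x y : ℝ} (hx : 0 < x) (hy : 0 < y) {d : Fin m → ℝ}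
    (hd : ∀ i, 0 < d i) {b : Fin p → ℝ} (hb : ∀ j, 0 < b j) :
    ∀ j, 0 < Fin.append (Fin.cons x (Fin.cons y d)) b j :=
  Fin.addCases (by simpa using Fin.cases hx (Fin.cases hy hd)) (by simpa using hb)

theorem Jint_append_cons_cons_le {p m : ℕ} (hp : 1 ≤ p) {x y : ℝ} (hx : 0 < x) (hy : 0 < y)
    {b : Fin p → ℝ} (hb : ∀ j, 0 < b j) {d : Fin m → ℝ} (hd : ∀ i, 0 < d i) :
    Jint (Fin.append (Fin.cons x (Fin.cons y d)) b)
      ≤ (∏ i, d i)⁻¹ * Jint (Fin.append ![x, y] b) := by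
  refine Jint_le_inv_mul_Jint (by omega) (append_cons_cons_pos hx hy finZeroElim hb)
    (Finset.prod_pos fun i _ => hd i) fun u hu => ?_
  have hd_le : ∏ i, d i ≤ ∏ i, (u + d i) :=
    Finset.prod_le_prod (fun i _ => (hd i).le) fun i _ => by linarith
  have hb_pos : 0 ≤ ∏ j, (u + b j) := Finset.prod_nonneg fun j _ => by linarith [hb j]
  simp only [Fin.prod_univ_add, Fin.append_left, Fin.append_right, Fin.prod_univ_succ,
    Fin.cons_zero, Fin.cons_succ, Fin.prod_univ_zero, mul_one]
  calc (∏ i, d i) * ((u + x) * (u + y) * ∏ j, (u + b j))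
      ≤ (∏ i, (u + d i)) * ((u + x) * (u + y) * ∏ j, (u + b j)) := by
        gcongr
    _ = (u + x) * ((u + y) * ∏ i, (u + d i)) * ∏ j, (u + b j) := by ring

end OneLoop

section FlavourExpansion

variable {ι : Type*} {D : ι → ℝ}

theorem sqrt_mul_sqrt_mul_pathProd (hD : ∀ i, 0 < D i) (A : Matrix ι ι ℝ) (I J : ι) {m : ℕ}
    (K : Fin m → ι) :
    √(D I) * √(D J) * pathProd (of fun i j => A i j / √(D i * D j)) I J K
      = (∏ i, D (K i))⁻¹ * pathProd A I J K := by
  have hsqrt : ∀ i, √(D i) ≠ 0 := fun i => (Real.sqrt_pos.mpr (hD i)).ne'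
  have hQ : (of fun i j => A i j / √(D i * D j))
      = of fun i j => (√(D i))⁻¹ * A i j * (√(D j))⁻¹ := by
    ext i j
    rw [of_apply, of_apply, Real.sqrt_mul (hD i).le]
    field_simp
  have hsq : ∀ i, (√(D i))⁻¹ ^ 2 = (D i)⁻¹ := fun i => by
    rw [inv_pow, Real.sq_sqrt (hD i).le]
  have hprod : ∏ i, D (K i) ≠ 0 := (Finset.prod_pos fun i _ => hD (K i)).ne'
  rw [hQ, pathProd_of_mul_mul]
  simp only [hsq, Finset.prod_inv_distrib]
  field_simp [hsqrt I, hsqrt J]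

theorem sum_Jint_mul_pathProd_le [Fintype ι] [DecidableEq ι] (hD : ∀ i, 0 < D i)
    {A : Matrix ι ι ℝ} (hA : ∀ i j, 0 ≤ A i j) {p : ℕ} (hp : 1 ≤ p) {b : Fin p → ℝ}
    (hb : ∀ j, 0 < b j) (I J : ι) (m : ℕ) :
    ∑ K : Fin m → ι,
        Jint (Fin.append (Fin.cons (D I) (Fin.cons (D J) (fun i => D (K i)))) b) *
          pathProd A I J K
      ≤ Jint (Fin.append ![D I, D J] b) * √(D I) * √(D J) *
          ((of fun i j => A i j / √(D i * D j)) ^ (m + 1)) I J := by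
  calc _ ≤ ∑ K : Fin m → ι, Jint (Fin.append ![D I, D J] b) *
          ((∏ i, D (K i))⁻¹ * pathProd A I J K) := by
        refine Finset.sum_le_sum fun K _ => ?_
        rw [← mul_assoc, mul_comm (Jint (Fin.append ![D I, D J] b))]
        exact mul_le_mul_of_nonneg_right
          (Jint_append_cons_cons_le hp (hD I) (hD J) hb fun i => hD (K i))
          (pathProd_nonneg I J hA K)
    _ = _ := by
        rw [← sum_pathProd, Finset.mul_sum]
        refine Finset.sum_congr rfl fun K _ => ?_
        rw [← sqrt_mul_sqrt_mul_pathProd hD]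
        ring

end FlavourExpansion

theorem flavourExpansion_convergence_general {ι : Type*} [Fintype ι] [DecidableEq ι]
    (D : ι → ℝ) (hD : ∀ i, 0 < D i)
    (Ahat : Matrix ι ι ℂ) (hH : Ahat.IsHermitian)
    (p : ℕ) (hp : 2 ≤ p) (b : Fin p → ℝ) (hb : ∀ j, 0 < b j)
    (hQ : ∀ μ : ℝ, Module.End.HasEigenvalue
        (Matrix.toLin'
          (Matrix.of fun i j => ‖Ahat i j‖ / Real.sqrt (D i * D j))) μ →
      |μ| < 1)
    (I J : ι) :
    Summable (fun m : ℕ =>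
      ∑ K : Fin m → ι,
        Jint (Fin.append (Fin.cons (D I) (Fin.cons (D J) (fun i => D (K i)))) b) *
          pathProd (Matrix.of fun i j => ‖Ahat i j‖) I J K) := by
  set Q : Matrix ι ι ℝ := of fun i j => ‖Ahat i j‖ / √(D i * D j)
  have hQH : Q.IsHermitian := by
    ext i j
    simp [Q, ← hH.apply i j, mul_comm]
  have hQ_pow : Summable fun m => (Q ^ (m + 1)) I J :=
    (summable_nat_add_iff 1).mpr <|
      hQH.summable_pow_apply (fun k => hQ _ (hQH.hasEigenvalue_eigenvalues k)) I J
  have hA : ∀ i j, 0 ≤ (of fun i j => ‖Ahat i j‖ : Matrix ι ι ℝ) i j :=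
    fun i j => norm_nonneg (Ahat i j)
  refine Summable.of_nonneg_of_le (fun m => Finset.sum_nonneg fun K _ => mul_nonneg ?_ ?_)
    (sum_Jint_mul_pathProd_le hD hA (by omega) hb I J) (hQ_pow.mul_left _)
  · exact Jint_nonneg fun j => (append_cons_cons_pos (hD I) (hD J) (fun i => hD (K i)) hb j).le
  · exact pathProd_nonneg I J hA K

/-- **Convergence criterion for the flavour expansion of one-loop integrals.**
Let `D : ι → ℝ` be positive, `Ahat` a Hermitian complex matrix with zero
diagonal, `p ≥ 2`, `b₁,…,b_p > 0`, and let `Q` be the real symmetric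
mass-insertion matrix `Q_{IJ} = |Ahat_{IJ}| / √(D_I D_J)`.  If every eigenvalue
`μ` of `Q` satisfies `|μ| < 1`, then for all `I, J` the flavour expansion series
is absolutely convergent: the sequence (indexed by `M = m + 1 ≥ 1`)
`M ↦ ∑_{K₁,…,K_{M−1}} J_{M+1+p}(D_I, D_J, D_{K₁},…,D_{K_{M−1}}, b₁,…,b_p)
  · |Ahat_{IK₁}| ⋯ |Ahat_{K_{M−1}J}|` is summable. -/
theorem flavourExpansion_convergence {ι : Type*} [Fintype ι] [DecidableEq ι]
    (D : ι → ℝ) (hD : ∀ i, 0 < D i)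
    (Ahat : Matrix ι ι ℂ) (hH : Ahat.IsHermitian) (hdiag : ∀ i, Ahat i i = 0)
    (p : ℕ) (hp : 2 ≤ p) (b : Fin p → ℝ) (hb : ∀ j, 0 < b j)
    (hQ : ∀ μ : ℝ, Module.End.HasEigenvalue
        (Matrix.toLin'
          (Matrix.of fun i j => ‖Ahat i j‖ / Real.sqrt (D i * D j))) μ →
      |μ| < 1)
    (I J : ι) :
    Summable (fun m : ℕ =>
      ∑ K : Fin m → ι,
        Jint (Fin.append (Fin.cons (D I) (Fin.cons (D J) (fun i => D (K i)))) b) *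
          pathProd (Matrix.of fun i j => ‖Ahat i j‖) I J K) :=
  flavourExpansion_convergence_general D hD Ahat hH p hp b hb hQ I J
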